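/- arXiv:2405.06302 — 8 statements merged into one kernel-verified Lean document; each statement's English description precedes it below -/
import Mathlib

section
/- For f(x,y) = x² and g(x,y) = x·(x² + y²), every real analytic arc φ : (ℝ,0) → (ℝ²,0) with g∘φ not identically zero near 0 satisfies ℓ(φ) < 2; hence, since 𝓛_g(f) = 2, the Łojasiewicz exponent is not attained by any analytic arc. -/
/-- The set of Łojasiewicz exponents: real numbers `α > 0` such that
`|f| ≥ C·|g|^α` holds on some ball around the origin. -/
def lojSet (f g : ℝ × ℝ → ℝ) : Set ℝ :=
  {α : ℝ | 0 < α ∧ ∃ C > (0:ℝ), ∃ r > (0:ℝ), ∀ p : ℝ × ℝ, ‖p‖ ≤ r → C * |g p| ^ α ≤ |f p|}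

/-- `u` has order of vanishing `n` at `t = 0`: near `0`, `u t = t^n · v t` with `v`
analytic at `0` and `v 0 ≠ 0`. -/
def HasOrderAt (u : ℝ → ℝ) (n : ℕ) : Prop :=
  ∃ v : ℝ → ℝ, AnalyticAt ℝ v 0 ∧ v 0 ≠ 0 ∧ ∀ᶠ t in nhds (0:ℝ), u t = t ^ n * v t

lemma hasOrderAt_unique {u : ℝ → ℝ} {n n' : ℕ}
    (h : HasOrderAt u n) (h' : HasOrderAt u n') : n = n' := by
  apply AnalyticAt.unique_eventuallyEq_pow_smul_nonzero (f := u) (z₀ := (0:ℝ))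
  · obtain ⟨v, hv, hv0, hev⟩ := h
    exact ⟨v, hv, hv0, by simpa [smul_eq_mul] using hev⟩
  · obtain ⟨v, hv, hv0, hev⟩ := h'
    exact ⟨v, hv, hv0, by simpa [smul_eq_mul] using hev⟩

lemma two_mem_lojSet : (2:ℝ) ∈ lojSet (fun p : ℝ × ℝ => p.1 ^ 2)
    (fun p : ℝ × ℝ => p.1 * (p.1 ^ 2 + p.2 ^ 2)) := by
  refine ⟨two_pos, 1/4, by norm_num, 1, one_pos, fun p hp => ?_⟩
  have h1 : |p.1| ≤ 1 := le_trans (by simpa using norm_fst_le p) hp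
  have h2 : |p.2| ≤ 1 := le_trans (by simpa using norm_snd_le p) hp
  have hx2 : p.1 ^ 2 ≤ 1 := by nlinarith [abs_nonneg p.1, sq_abs p.1]
  have hy2 : p.2 ^ 2 ≤ 1 := by nlinarith [abs_nonneg p.2, sq_abs p.2]
  have : |p.1 * (p.1 ^ 2 + p.2 ^ 2)| ^ (2:ℝ) = (p.1 * (p.1 ^ 2 + p.2 ^ 2)) ^ (2:ℕ) := by
    rw [show (2:ℝ) = ((2:ℕ):ℝ) by norm_num, Real.rpow_natCast, sq_abs]
  rw [this, abs_of_nonneg (sq_nonneg p.1)]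
  have hs : (p.1 ^ 2 + p.2 ^ 2) ^ 2 ≤ 4 := by nlinarith
  rw [mul_pow]
  nlinarith [mul_nonneg (sub_nonneg.2 hs) (sq_nonneg p.1)]

lemma lojSet_lower (α : ℝ) (hα : α ∈ lojSet (fun p : ℝ × ℝ => p.1 ^ 2)
    (fun p : ℝ × ℝ => p.1 * (p.1 ^ 2 + p.2 ^ 2))) : 2 ≤ α := by
  obtain ⟨hα0, C, hC, r, hr, hball⟩ := hα
  by_contra hlt
  push_neg at hlt
  set k : ℕ := ⌈2*α/(2-α)⌉₊ + 1 with hk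
  have hk1 : 1 ≤ k := Nat.le_add_left 1 _
  have h2α : (0:ℝ) < 2 - α := by linarith
  have hkgt : 2*α/(2-α) < (k:ℝ) := by
    calc 2*α/(2-α) ≤ (⌈2*α/(2-α)⌉₊ : ℝ) := Nat.le_ceil _
    _ < (k:ℝ) := by rw [hk]; push_cast; linarith
  set ε : ℝ := 2*(k:ℝ) - α*((k:ℝ)+2) with hε
  have hεpos : 0 < ε := by
    have := (div_lt_iff₀ h2α).1 hkgt
    rw [hε]; nlinarith
  -- the key estimate: C ≤ t ^ ε for small positive t
  have key : ∀ t : ℝ, 0 < t → t ≤ min r 1 → C ≤ t ^ ε := by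
    intro t ht htle
    have ht1 : t ≤ 1 := le_trans htle (min_le_right _ _)
    have htr : t ≤ r := le_trans htle (min_le_left _ _)
    have htk : t ^ k ≤ t := by
      calc t ^ k ≤ t ^ 1 := pow_le_pow_of_le_one ht.le ht1 hk1
      _ = t := pow_one t
    have hpnorm : ‖((t ^ k, t) : ℝ × ℝ)‖ ≤ r := by
      rw [Prod.norm_def]
      simp only [Real.norm_eq_abs]
      rw [abs_of_pos (pow_pos ht k), abs_of_pos ht]
      exact max_le (le_trans htk htr) htr
    have := hball ((t ^ k, t)) hpnorm
    simp only at this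
    -- this : C * |t^k * ((t^k)^2 + t^2)| ^ α ≤ |(t^k)^2|
    have hinner : (0:ℝ) < t ^ k * ((t ^ k) ^ 2 + t ^ 2) := by positivity
    rw [abs_of_pos hinner, abs_of_pos (by positivity : (0:ℝ) < (t ^ k) ^ 2)] at this
    have hlow : t ^ (k + 2) ≤ t ^ k * ((t ^ k) ^ 2 + t ^ 2) := by
      rw [pow_add]
      have : t ^ 2 ≤ (t ^ k) ^ 2 + t ^ 2 := le_add_of_nonneg_left (by positivity)
      exact mul_le_mul_of_nonneg_left this (by positivity)
    have hmono : (t ^ (k + 2)) ^ α ≤ (t ^ k * ((t ^ k) ^ 2 + t ^ 2)) ^ α :=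
      Real.rpow_le_rpow (by positivity) hlow hα0.le
    have hCle : C * (t ^ (k + 2)) ^ α ≤ t ^ (2 * k) := by
      calc C * (t ^ (k + 2)) ^ α ≤ C * (t ^ k * ((t ^ k) ^ 2 + t ^ 2)) ^ α :=
            mul_le_mul_of_nonneg_left hmono hC.le
      _ ≤ (t ^ k) ^ 2 := this
      _ = t ^ (2 * k) := by rw [← pow_mul, mul_comm]
    -- rewrite everything in rpow
    have e1 : (t ^ (k + 2) : ℝ) ^ α = t ^ (((k:ℝ) + 2) * α) := by
      rw [← Real.rpow_natCast t (k + 2), ← Real.rpow_mul ht.le]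
      push_cast; ring_nf
    have e2 : (t : ℝ) ^ (2 * k) = t ^ ((2 * (k:ℝ)) : ℝ) := by
      rw [← Real.rpow_natCast t (2 * k)]; push_cast; ring_nf
    rw [e1, e2] at hCle
    have hpos : (0:ℝ) < t ^ (((k:ℝ) + 2) * α) := Real.rpow_pos_of_pos ht _
    have : C ≤ t ^ ((2 * (k:ℝ)) : ℝ) / t ^ (((k:ℝ) + 2) * α) :=
      (le_div_iff₀ hpos).2 hCle
    rwa [← Real.rpow_sub ht, show 2 * (k:ℝ) - ((k:ℝ) + 2) * α = ε by rw [hε]; ring] at this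
  -- pick a concrete small t giving a contradiction
  set t₀ : ℝ := min (min r 1) ((C/2) ^ ε⁻¹) with ht₀
  have hCpos : (0:ℝ) < (C/2) ^ ε⁻¹ := Real.rpow_pos_of_pos (by linarith) _
  have ht₀pos : 0 < t₀ := lt_min (lt_min hr one_pos) hCpos
  have h1 := key t₀ ht₀pos (min_le_left _ _)
  have h2 : t₀ ^ ε ≤ C / 2 := by
    calc t₀ ^ ε ≤ ((C/2) ^ ε⁻¹) ^ ε :=
          Real.rpow_le_rpow ht₀pos.le (min_le_right _ _) hεpos.le
    _ = (C/2) ^ (ε⁻¹ * ε) := by rw [← Real.rpow_mul (by linarith)]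
    _ = C / 2 := by rw [inv_mul_cancel₀ hεpos.ne', Real.rpow_one]
  linarith

/-- For `f(x,y) = x²` and `g(x,y) = x·(x² + y²)`, every real analytic arc
`φ : (ℝ,0) → (ℝ²,0)` with `g ∘ φ` not identically zero near `0` satisfies `ℓ(φ) < 2`;
hence, since `𝓛_g(f) = 2`, the Łojasiewicz exponent is not attained by any analytic arc. -/
theorem lojasiewicz_exponent_example_not_attained
    (φ : ℝ → ℝ × ℝ) (hφ : AnalyticAt ℝ φ 0) (hφ0 : φ 0 = 0)
    (hgφ : ¬ ∀ᶠ t in nhds (0:ℝ), (φ t).1 * ((φ t).1 ^ 2 + (φ t).2 ^ 2) = 0)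
    (n m : ℕ)
    (hn : HasOrderAt (fun t => (φ t).1 ^ 2) n)
    (hm : HasOrderAt (fun t => (φ t).1 * ((φ t).1 ^ 2 + (φ t).2 ^ 2)) m) :
    (n : ℝ) / (m : ℝ) < 2 ∧
    (n : ℝ) / (m : ℝ) ≠ sInf (lojSet (fun p : ℝ × ℝ => p.1 ^ 2)
      (fun p : ℝ × ℝ => p.1 * (p.1 ^ 2 + p.2 ^ 2))) := by
  -- set up the two coordinate functions
  have hx : AnalyticAt ℝ (fun t => (φ t).1) 0 :=
    ((ContinuousLinearMap.fst ℝ ℝ ℝ).analyticAt _).comp hφ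
  have hy : AnalyticAt ℝ (fun t => (φ t).2) 0 :=
    ((ContinuousLinearMap.snd ℝ ℝ ℝ).analyticAt _).comp hφ
  have hx0 : (φ 0).1 = 0 := by rw [hφ0]; rfl
  have hy0 : (φ 0).2 = 0 := by rw [hφ0]; rfl
  -- x is not eventually zero
  have hxne : ¬ ∀ᶠ t in nhds (0:ℝ), (φ t).1 = 0 := by
    intro h
    exact hgφ (h.mono fun t ht => by rw [ht]; ring)
  obtain ⟨a, u, hu, hu0, hxu⟩ :=
    hx.exists_eventuallyEq_pow_smul_nonzero_iff.2 hxne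
  simp only [sub_zero, smul_eq_mul] at hxu
  have ha1 : 1 ≤ a := by
    rcases Nat.eq_zero_or_pos a with h0 | h; swap; · exact h
    exfalso
    have := hxu.self_of_nhds
    rw [hx0, h0, pow_zero, one_mul] at this
    exact hu0 this.symm
  -- u is eventually nonzero
  have huev : ∀ᶠ t in nhds (0:ℝ), u t ≠ 0 :=
    hu.continuousAt.eventually_ne hu0
  -- h := x² + y² is not eventually zero
  have hh : AnalyticAt ℝ (fun t => (φ t).1 ^ 2 + (φ t).2 ^ 2) 0 :=
    (hx.pow 2).add (hy.pow 2)
  have hhne : ¬ ∀ᶠ t in nhds (0:ℝ), (φ t).1 ^ 2 + (φ t).2 ^ 2 = 0 := by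
    intro h
    apply hxne
    filter_upwards [h] with t ht
    nlinarith [sq_nonneg (φ t).1, sq_nonneg (φ t).2]
  obtain ⟨b, w, hw, hw0, hhw⟩ :=
    hh.exists_eventuallyEq_pow_smul_nonzero_iff.2 hhne
  simp only [sub_zero, smul_eq_mul] at hhw
  have hb1 : 1 ≤ b := by
    rcases Nat.eq_zero_or_pos b with h0 | h; swap; · exact h
    exfalso
    have := hhw.self_of_nhds
    rw [hx0, hy0, h0, pow_zero, one_mul] at this
    simp at this
    exact hw0 this.symm
  -- compute n = 2a and m = a + b
  have hn' : HasOrderAt (fun t => (φ t).1 ^ 2) (2 * a) := by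
    refine ⟨fun t => u t ^ 2, hu.pow 2, pow_ne_zero 2 hu0, ?_⟩
    filter_upwards [hxu] with t ht
    rw [ht]; ring
  have hm' : HasOrderAt (fun t => (φ t).1 * ((φ t).1 ^ 2 + (φ t).2 ^ 2)) (a + b) := by
    refine ⟨fun t => u t * w t, hu.mul hw, mul_ne_zero hu0 hw0, ?_⟩
    filter_upwards [hxu, hhw] with t ht1 ht2
    rw [ht2, ht1]; ring
  have hna : n = 2 * a := hasOrderAt_unique hn hn'
  have hmab : m = a + b := hasOrderAt_unique hm hm'
  have ha : (1:ℝ) ≤ (a:ℝ) := by exact_mod_cast ha1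
  have hb : (1:ℝ) ≤ (b:ℝ) := by exact_mod_cast hb1
  have hlt2 : (n : ℝ) / (m : ℝ) < 2 := by
    rw [hna, hmab]
    push_cast
    rw [div_lt_iff₀ (by linarith)]
    linarith
  refine ⟨hlt2, ?_⟩
  have hsInf : (2:ℝ) ≤ sInf (lojSet (fun p : ℝ × ℝ => p.1 ^ 2)
      (fun p : ℝ × ℝ => p.1 * (p.1 ^ 2 + p.2 ^ 2))) :=
    le_csInf ⟨2, two_mem_lojSet⟩ lojSet_lower
  exact ne_of_lt (lt_of_lt_of_le hlt2 hsInf)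
end

section
/- Under the stated factorization hypothesis, for all sufficiently large positive integers q, the order of vanishing at t = 0 of the real analytic function t ↦ f(β(t) + t^q, t^N) equals q·m + ord₀(h(β(t), t)), where ord₀ denotes the order of vanishing at t = 0. -/
/-!
Along `γ t = (β t + t ^ q, t)` the factorization reads
`f (β t + t ^ q, t ^ N) = t ^ (q * m) * h (γ t)`, so it suffices that `h ∘ γ` still has order `k`.
Since `h` has a strict derivative at the origin, `h ∘ γ - h ∘ γ₀` with `γ₀ t = (β t, t)` is
`O(‖γ - γ₀‖) = O(t ^ q)`, and an analytic function that is `O(t ^ q)` vanishes to order at least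
`q`. For `q > k` the perturbation thus cannot change the order `k` of `h ∘ γ₀`.
-/
open Filter Topology Asymptotics

section

variable {𝕜 E F : Type*} [NontriviallyNormedField 𝕜] [NormedAddCommGroup E] [NormedSpace 𝕜 E]
  [NormedAddCommGroup F] [NormedSpace 𝕜 F]

theorem AnalyticAt.natCast_le_analyticOrderAt_of_isBigO {f : 𝕜 → E} {z₀ : 𝕜} {n : ℕ}
    (hf : AnalyticAt 𝕜 f z₀) (hO : f =O[𝓝 z₀] fun z => (z - z₀) ^ n) :
    (n : ℕ∞) ≤ analyticOrderAt f z₀ := by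
  by_contra! hlt
  obtain ⟨j, hj⟩ := ENat.ne_top_iff_exists.mp hlt.ne_top
  rw [← hj, Nat.cast_lt] at hlt
  obtain ⟨g, hg, hg0, hfg⟩ := hf.analyticOrderAt_eq_natCast.mp hj.symm
  -- Dividing by `(z - z₀) ^ j` off `z₀`, `g` is `O((z - z₀) ^ (n - j))`, hence tends to `0`.
  have hgO : g =O[𝓝[≠] z₀] fun z => (z - z₀) ^ (n - j) := by
    refine ((isBigO_refl (fun z => ((z - z₀) ^ j)⁻¹) _).smul
      (hO.mono nhdsWithin_le_nhds)).congr' ?_ ?_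
    · filter_upwards [self_mem_nhdsWithin, hfg.filter_mono nhdsWithin_le_nhds] with z hz hfz
      rw [hfz, inv_smul_smul₀ (pow_ne_zero _ (sub_ne_zero.mpr hz))]
    · filter_upwards [self_mem_nhdsWithin] with z hz
      rw [smul_eq_mul, pow_sub₀ _ (sub_ne_zero.mpr hz) hlt.le, mul_comm]
  have hlim : Tendsto (fun z => (z - z₀) ^ (n - j)) (𝓝[≠] z₀) (𝓝 0) := by
    have : Tendsto (fun z => (z - z₀) ^ (n - j)) (𝓝 z₀) (𝓝 ((z₀ - z₀) ^ (n - j))) :=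
      ((continuous_id.sub continuous_const).pow _).tendsto z₀
    rw [sub_self, zero_pow (Nat.sub_ne_zero_of_lt hlt)] at this
    exact this.mono_left nhdsWithin_le_nhds
  exact hg0 (tendsto_nhds_unique (hg.continuousAt.tendsto.mono_left nhdsWithin_le_nhds)
    (hgO.trans_tendsto hlim))

theorem AnalyticAt.analyticOrderAt_comp_eq_of_isBigO [CompleteSpace F] {h : E → F}
    {γ γ₀ : 𝕜 → E} {x : E} {z₀ : 𝕜} {q : ℕ} (hh : AnalyticAt 𝕜 h x)
    (hγ : AnalyticAt 𝕜 γ z₀) (hγ₀ : AnalyticAt 𝕜 γ₀ z₀) (hx : γ z₀ = x) (hx₀ : γ₀ z₀ = x)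
    (hO : (fun z => γ z - γ₀ z) =O[𝓝 z₀] fun z => (z - z₀) ^ q)
    (hlt : analyticOrderAt (h ∘ γ₀) z₀ < q) :
    analyticOrderAt (h ∘ γ) z₀ = analyticOrderAt (h ∘ γ₀) z₀ := by
  have hγx : Tendsto γ (𝓝 z₀) (𝓝 x) := hx ▸ hγ.continuousAt.tendsto
  have hγ₀x : Tendsto γ₀ (𝓝 z₀) (𝓝 x) := hx₀ ▸ hγ₀.continuousAt.tendsto
  have hdiff : AnalyticAt 𝕜 (h ∘ γ - h ∘ γ₀) z₀ :=
    (hh.comp_of_eq hγ hx).sub (hh.comp_of_eq hγ₀ hx₀)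
  have hdiffO : (h ∘ γ - h ∘ γ₀) =O[𝓝 z₀] fun z => (z - z₀) ^ q :=
    (hh.hasStrictFDerivAt.isBigO_sub.comp_tendsto (hγx.prodMk_nhds hγ₀x)).trans hO
  have := analyticOrderAt_add_eq_left_of_lt
    (hlt.trans_le (hdiff.natCast_le_analyticOrderAt_of_isBigO hdiffO))
  rwa [add_sub_cancel] at this

end

theorem hasOrderAt_iff_analyticOrderAt {u : ℝ → ℝ} {n : ℕ} :
    HasOrderAt u n ↔ AnalyticAt ℝ u 0 ∧ analyticOrderAt u 0 = n := by
  simp only [HasOrderAt]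
  constructor
  · rintro ⟨v, hv, hv0, huv⟩
    have hu : AnalyticAt ℝ u 0 := ((analyticAt_id.pow n).mul hv).congr (EventuallyEq.symm huv)
    exact ⟨hu, hu.analyticOrderAt_eq_natCast.mpr (by simpa using ⟨v, hv, hv0, huv⟩)⟩
  · rintro ⟨hu, hn⟩
    simpa using hu.analyticOrderAt_eq_natCast.mp hn

theorem order_along_perturbed_root_general
    (f : ℝ × ℝ → ℝ)
    (N : ℕ)
    (β : ℝ → ℝ) (hβ : AnalyticAt ℝ β 0) (hβ0 : β 0 = 0)
    (m : ℕ)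
    (h : ℝ × ℝ → ℝ) (hh : AnalyticAt ℝ h 0)
    (hfactf : ∀ᶠ q in nhds (0 : ℝ × ℝ), f (q.1, q.2 ^ N) = (q.1 - β q.2) ^ m * h q)
    (k : ℕ) (hk : HasOrderAt (fun t => h (β t, t)) k) :
    ∃ q₀ : ℕ, ∀ q : ℕ, q₀ ≤ q →
      HasOrderAt (fun t => f (β t + t ^ q, t ^ N)) (q * m + k) := by
  refine ⟨k + 1, fun q hq => ?_⟩
  set γ : ℝ → ℝ × ℝ := fun t => (β t + t ^ q, t)
  have hγ : AnalyticAt ℝ γ 0 := (hβ.add (analyticAt_id.pow q)).prod analyticAt_id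
  have hγ0 : γ 0 = 0 := by simp [γ, hβ0, zero_pow (by omega : q ≠ 0)]
  have hhγ : analyticOrderAt (h ∘ γ) 0 = k := by
    have hordk := (hasOrderAt_iff_analyticOrderAt.mp hk).2
    rw [← hordk]
    refine hh.analyticOrderAt_comp_eq_of_isBigO (q := q) hγ (hβ.prod analyticAt_id) hγ0
      (by simp [hβ0]) (isBigO_of_le _ fun t => by simp [γ]) ?_
    rw [Function.comp_def, hordk]
    exact_mod_cast hq
  have hfγ : (fun t => f (β t + t ^ q, t ^ N)) =ᶠ[𝓝 0] id ^ (q * m) * (h ∘ γ) := by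
    filter_upwards [(hγ0 ▸ hγ.continuousAt.tendsto).eventually hfactf] with t ht
    simpa [γ, ← pow_mul] using ht
  have hmono : analyticOrderAt (id ^ (q * m) : ℝ → ℝ) 0 = (q * m : ℕ) := by
    simp [analyticOrderAt_pow analyticAt_id]
  have hhγa : AnalyticAt ℝ (h ∘ γ) 0 := hh.comp_of_eq hγ hγ0
  rw [hasOrderAt_iff_analyticOrderAt, analyticAt_congr hfγ, analyticOrderAt_congr hfγ,
    analyticOrderAt_mul (analyticAt_id.pow _) hhγa, hmono, hhγ]
  exact ⟨(analyticAt_id.pow _).mul hhγa, by push_cast; rfl⟩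

/-- If `f(x, t^N) = (x − β(t))^m · h(x,t)` near the origin with `t ↦ h(β(t),t)` not
identically zero of order `k`, then for all sufficiently large `q`, the order of
vanishing at `t = 0` of `t ↦ f(β(t) + t^q, t^N)` equals `q·m + k`. -/
theorem order_along_perturbed_root
    (f : ℝ × ℝ → ℝ) (hf : AnalyticAt ℝ f 0) (hf0 : f 0 = 0)
    (hfne : ¬ ∀ᶠ p in nhds (0 : ℝ × ℝ), f p = 0)
    (N : ℕ) (hN : 0 < N)
    (β : ℝ → ℝ) (hβ : AnalyticAt ℝ β 0) (hβ0 : β 0 = 0)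
    (m : ℕ) (hm : 0 < m)
    (h : ℝ × ℝ → ℝ) (hh : AnalyticAt ℝ h 0)
    (hfactf : ∀ᶠ q in nhds (0 : ℝ × ℝ), f (q.1, q.2 ^ N) = (q.1 - β q.2) ^ m * h q)
    (hhne : ¬ ∀ᶠ t in nhds (0:ℝ), h (β t, t) = 0)
    (k : ℕ) (hk : HasOrderAt (fun t => h (β t, t)) k) :
    ∃ q₀ : ℕ, ∀ q : ℕ, q₀ ≤ q →
      HasOrderAt (fun t => f (β t + t ^ q, t ^ N)) (q * m + k) :=
  order_along_perturbed_root_general f N β hβ hβ0 m h hh hfactf k hk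
end

section
/- There exists a finite set B ⊂ ℝ such that for every c ∈ ℝ \ B and every formal power series η ∈ ℝ[[t]] with order(η) > p, the power series Σ_{i=0}^d c_i·(c·t^p + η)^i has t-adic order equal to min_{0 ≤ i ≤ d} (i·p + b_i); in particular, this order is at most b_0. -/
/-!
Write `a t^p + η = t^p u` with `u(0) = a`. Modulo `t^(i p + order cᵢ + 1)` the term `cᵢ (t^p u)^i`
agrees with `aⁱ t^(i p) cᵢ`, so every term has order at least `N = minᵢ (i p + order cᵢ)`, and the
coefficient of `t^N` in the sum is `P(a)` for a polynomial `P` whose coefficients at the indices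
attaining the minimum are the leading coefficients of those `cᵢ`, hence nonzero. So the order is
exactly `N` unless `a` is one of the finitely many roots of `P`.
-/

open PowerSeries

namespace PowerSeries

variable {R : Type*} [CommRing R]

theorem le_order_sum {ι : Type*} (s : Finset ι) (f : ι → R⟦X⟧) :
    s.inf (fun i => (f i).order) ≤ (∑ i ∈ s, f i).order :=
  le_order _ _ fun k hk => by
    rw [map_sum]
    exact Finset.sum_eq_zero fun i hi => coeff_of_lt_order k (hk.trans_le (Finset.inf_le hi))

theorem le_order_X_pow_mul (k : ℕ) (φ : R⟦X⟧) : (k : ℕ∞) + φ.order ≤ (X ^ k * φ).order := by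
  refine le_order _ _ fun n hn => ?_
  rw [coeff_X_pow_mul']
  split_ifs with hkn
  · rw [← Nat.sub_add_cancel hkn, Nat.cast_add, add_comm] at hn
    exact coeff_of_lt_order _ ((WithTop.add_lt_add_iff_left (ENat.natCast_ne_top k)).mp hn)
  · rfl

theorem exists_eq_X_pow_mul_of_lt_order (a : R) {p : ℕ} {η : R⟦X⟧} (hη : (p : ℕ∞) < η.order) :
    ∃ u : R⟦X⟧, C a * X ^ p + η = X ^ p * u ∧ X ∣ u - C a := by
  obtain ⟨ε, rfl⟩ : X ^ (p + 1) ∣ η := X_pow_dvd_iff.mpr fun m hm =>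
    coeff_of_lt_order m ((Nat.cast_le.mpr (Nat.lt_succ_iff.mp hm)).trans_lt hη)
  exact ⟨C a + X * ε, by ring, by simp⟩

theorem le_order_mul_pow (φ u : R⟦X⟧) (m k : ℕ) :
    (k * m : ℕ∞) + φ.order ≤ (φ * (X ^ m * u) ^ k).order := by
  have h : φ * (X ^ m * u) ^ k = X ^ (k * m) * (φ * u ^ k) := by ring
  calc (k * m : ℕ∞) + φ.order ≤ ((k * m : ℕ) : ℕ∞) + (φ * u ^ k).order := by
        push_cast
        exact add_le_add le_rfl (le_self_add.trans (le_order_mul φ (u ^ k)))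
    _ ≤ _ := h ▸ le_order_X_pow_mul _ _

theorem coeff_mul_pow_of_le_order (φ : R⟦X⟧) {u : R⟦X⟧} {a : R} (hu : X ∣ u - C a) {n m k : ℕ}
    (hn : (n : ℕ∞) ≤ (k * m : ℕ∞) + φ.order) :
    coeff n (φ * (X ^ m * u) ^ k) = coeff n (X ^ (k * m) * φ) * a ^ k := by
  obtain ⟨w, hw⟩ := hu
  obtain ⟨q, hq⟩ := sub_dvd_pow_sub_pow u (C a) k
  have h : φ * (X ^ m * u) ^ k =
      X ^ (k * m) * φ * C (a ^ k) + X ^ (k * m + 1) * (φ * (w * q)) := by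
    rw [map_pow]
    linear_combination (X ^ (k * m) * φ) * hq + (X ^ (k * m) * φ * q) * hw
  have hlt : (n : ℕ∞) < (X ^ (k * m + 1) * (φ * (w * q))).order := calc
    (n : ℕ∞) < (k * m : ℕ∞) + φ.order + 1 := by
      simpa only [Nat.cast_succ] using
        (ENat.natCast_lt_natCast.mpr n.lt_succ_self).trans_le (add_le_add hn le_rfl)
    _ ≤ ((k * m + 1 : ℕ) : ℕ∞) + (φ * (w * q)).order := by
      push_cast
      rw [add_right_comm]
      exact add_le_add le_rfl (le_self_add.trans (le_order_mul φ (w * q)))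
    _ ≤ _ := le_order_X_pow_mul _ _
  rw [h, map_add, coeff_mul_C, coeff_of_lt_order n hlt, add_zero]

variable {d : ℕ}

-- When `n` is the minimum of `i * p + order (c i)`, the coefficients of this polynomial at the
-- indices attaining it are the leading coefficients of those `c i`, and all others vanish.
noncomputable def initialForm (c : Fin (d + 1) → R⟦X⟧) (p n : ℕ) : Polynomial R :=
  ∑ i : Fin (d + 1), Polynomial.monomial i (coeff n (X ^ ((i : ℕ) * p) * c i))

theorem coeff_initialForm (c : Fin (d + 1) → R⟦X⟧) (p n : ℕ) (i : Fin (d + 1)) :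
    (initialForm c p n).coeff i = coeff n (X ^ ((i : ℕ) * p) * c i) := by
  rw [initialForm, Polynomial.finsetSum_coeff, Finset.sum_eq_single i]
  · exact Polynomial.coeff_monomial_same _ _
  · exact fun j _ hji => Polynomial.coeff_monomial_of_ne _ (Fin.val_injective.ne hji.symm)
  · exact fun h => absurd (Finset.mem_univ i) h

theorem initialForm_ne_zero {c : Fin (d + 1) → R⟦X⟧} {p n : ℕ} {i : Fin (d + 1)}
    (hi : ((i : ℕ) * p : ℕ∞) + (c i).order = n) : initialForm c p n ≠ 0 := by
  obtain ⟨b, hb⟩ : ∃ b : ℕ, b = (c i).order :=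
    ENat.ne_top_iff_exists.mp fun h => by simp [h] at hi
  have hn : (i : ℕ) * p + b = n := by exact_mod_cast hb.symm ▸ hi
  have hcoeff : (initialForm c p n).coeff i ≠ 0 := by
    rw [coeff_initialForm, coeff_X_pow_mul', if_pos (by omega), show n - (i : ℕ) * p = b by omega]
    exact (order_eq_nat.mp hb.symm).1
  exact fun h => hcoeff (by rw [h, Polynomial.coeff_zero])

theorem coeff_sum_mul_pow_eq_eval (c : Fin (d + 1) → R⟦X⟧) {u : R⟦X⟧} {a : R} (hu : X ∣ u - C a)
    {p n : ℕ}
    (hn : (n : ℕ∞) ≤ Finset.univ.inf fun i : Fin (d + 1) => ((i : ℕ) * p : ℕ∞) + (c i).order) :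
    coeff n (∑ i : Fin (d + 1), c i * (X ^ p * u) ^ (i : ℕ)) = (initialForm c p n).eval a := by
  rw [map_sum, initialForm, Polynomial.eval_finsetSum]
  refine Finset.sum_congr rfl fun i _ => ?_
  rw [coeff_mul_pow_of_le_order _ hu (hn.trans (Finset.inf_le (Finset.mem_univ i))),
    Polynomial.eval_monomial]

theorem le_order_sum_mul_pow (c : Fin (d + 1) → R⟦X⟧) (u : R⟦X⟧) (p : ℕ) :
    (Finset.univ.inf fun i : Fin (d + 1) => ((i : ℕ) * p : ℕ∞) + (c i).order) ≤
      (∑ i : Fin (d + 1), c i * (X ^ p * u) ^ (i : ℕ)).order :=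
  (Finset.inf_mono_fun fun _ _ => le_order_mul_pow _ _ _ _).trans (le_order_sum _ _)

end PowerSeries

theorem order_generic_perturbation_general
    (d : ℕ) (c : Fin (d + 1) → PowerSeries ℝ)
    (p : ℕ) :
    ∃ B : Finset ℝ, ∀ a : ℝ, a ∉ B → ∀ η : PowerSeries ℝ, (p : ℕ∞) < η.order →
      (∑ i : Fin (d + 1),
        c i * (PowerSeries.C a * PowerSeries.X ^ p + η) ^ (i : ℕ)).order =
        Finset.univ.inf (fun i : Fin (d + 1) => ((i : ℕ) * p : ℕ∞) + (c i).order) ∧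
      (∑ i : Fin (d + 1),
        c i * (PowerSeries.C a * PowerSeries.X ^ p + η) ^ (i : ℕ)).order ≤
        (c 0).order := by
  set N := Finset.univ.inf fun i : Fin (d + 1) => ((i : ℕ) * p : ℕ∞) + (c i).order
  refine ⟨(initialForm c p N.toNat).roots.toFinset, fun a ha η hη => ?_⟩
  obtain ⟨u, hg, hu⟩ := exists_eq_X_pow_mul_of_lt_order a hη
  rw [hg]
  have hlow : N ≤ (∑ i : Fin (d + 1), c i * (X ^ p * u) ^ (i : ℕ)).order :=
    le_order_sum_mul_pow c u p
  have horder : (∑ i : Fin (d + 1), c i * (X ^ p * u) ^ (i : ℕ)).order = N := by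
    obtain hN | ⟨n, hn⟩ := (em (N = ⊤)).imp_right ENat.ne_top_iff_exists.mp
    · exact hN ▸ top_le_iff.mp (hN ▸ hlow)
    obtain ⟨i, -, hi⟩ := Finset.exists_mem_eq_inf Finset.univ Finset.univ_nonempty
      fun i : Fin (d + 1) => ((i : ℕ) * p : ℕ∞) + (c i).order
    refine le_antisymm (hn ▸ order_le n ?_) hlow
    rw [coeff_sum_mul_pow_eq_eval c hu hn.le]
    rw [← hn, ENat.toNat_natCast] at ha
    exact fun h => ha (Multiset.mem_toFinset.mpr
      (Polynomial.mem_roots'.mpr ⟨initialForm_ne_zero (hi.symm.trans hn.symm), h⟩))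
  refine ⟨horder, horder ▸ (Finset.inf_le (Finset.mem_univ 0)).trans_eq (by simp)⟩

/-- Newton polygon computation of the order of `f` along a generic perturbation of an arc
(integer-exponent form of Lemma 2.2(i)): for generic `c`, the `t`-adic order of
`Σ cᵢ·(c·t^p + η)^i` equals `min_i (i·p + order cᵢ)`, and in particular is `≤ order c₀`. -/
theorem order_generic_perturbation
    (d : ℕ) (c : Fin (d + 1) → PowerSeries ℝ) (hc : ∃ i, c i ≠ 0)
    (p : ℕ) (hp : 0 < p) :
    ∃ B : Finset ℝ, ∀ a : ℝ, a ∉ B → ∀ η : PowerSeries ℝ, (p : ℕ∞) < η.order →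
      (∑ i : Fin (d + 1),
        c i * (PowerSeries.C a * PowerSeries.X ^ p + η) ^ (i : ℕ)).order =
        Finset.univ.inf (fun i : Fin (d + 1) => ((i : ℕ) * p : ℕ∞) + (c i).order) ∧
      (∑ i : Fin (d + 1),
        c i * (PowerSeries.C a * PowerSeries.X ^ p + η) ^ (i : ℕ)).order ≤
        (c 0).order :=
  order_generic_perturbation_general d c p
end

section
/- If c ∈ ℝ satisfies Σ_{i ∈ S} a_i·c^i = 0, then for every formal power series η ∈ ℝ[[t]] with order(η) > p, the power series Σ_{i=0}^d c_i·(c·t^p + η)^i has t-adic order strictly greater than b_0. -/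
/-!
With `g = a·tᵖ + η`, the power `gⁱ` has order `≥ i·p` and `t^{i·p}`-coefficient `aⁱ`. Hence every
term `cᵢ·gⁱ` has order `≥ b₀`, and its `t^{b₀}`-coefficient is `aᵢ·aⁱ` for `i ∈ S` and `0`
otherwise. The `t^{b₀}`-coefficient of the sum is therefore `Σ_{i ∈ S} aᵢ·aⁱ = 0`.
-/

open PowerSeries

namespace PowerSeries

variable {R : Type*} [Semiring R]

theorem coeff_add_mul_of_le_order {φ ψ : R⟦X⟧} {m k : ℕ} (hφ : (m : ℕ∞) ≤ φ.order)
    (hψ : (k : ℕ∞) ≤ ψ.order) : coeff (m + k) (φ * ψ) = coeff m φ * coeff k ψ := by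
  rw [coeff_mul, Finset.sum_eq_single (m, k)]
  · rintro ⟨j, l⟩ hjl hne
    rw [Finset.HasAntidiagonal.mem_antidiagonal] at hjl
    rcases lt_or_ge j m with hj | hj
    · rw [coeff_of_lt_order j (lt_of_lt_of_le (by exact_mod_cast hj) hφ), zero_mul]
    · have hl : l < k := by
        by_contra! hl
        exact hne (Prod.ext (by omega) (by omega))
      rw [coeff_of_lt_order l (lt_of_lt_of_le (by exact_mod_cast hl) hψ), mul_zero]
  · simp

theorem coeff_mul_eq_ite_of_le_order {φ ψ : R⟦X⟧} {m n : ℕ} (hψ : (m : ℕ∞) ≤ ψ.order)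
    (hn : (n : ℕ∞) ≤ m + φ.order) :
    coeff n (φ * ψ) = if m + φ.order = n then coeff φ.order.toNat φ * coeff m ψ else 0 := by
  split_ifs with h
  · have hφ : φ.order ≠ ⊤ := fun htop => by simp [htop] at h
    obtain ⟨b, hb⟩ := ENat.ne_top_iff_exists.mp hφ
    obtain rfl : b + m = n := by rw [← hb] at h; exact_mod_cast (add_comm _ _).trans h
    rw [← hb, ENat.toNat_natCast]
    exact coeff_add_mul_of_le_order hb.le hψ
  · refine coeff_of_lt_order n ?_
    calc (n : ℕ∞) < m + φ.order := lt_of_le_of_ne hn (Ne.symm h)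
      _ ≤ φ.order + ψ.order := by rw [add_comm]; gcongr
      _ ≤ (φ * ψ).order := le_order_mul φ ψ

theorem nat_mul_le_order_pow {g : R⟦X⟧} {p : ℕ} (hg : (p : ℕ∞) ≤ g.order) (i : ℕ) :
    ((i * p : ℕ) : ℕ∞) ≤ (g ^ i).order :=
  calc ((i * p : ℕ) : ℕ∞) = i • (p : ℕ∞) := by simp
    _ ≤ i • g.order := by gcongr
    _ ≤ (g ^ i).order := le_order_pow g i

theorem coeff_pow_of_le_order {g : R⟦X⟧} {p : ℕ} (hg : (p : ℕ∞) ≤ g.order) (i : ℕ) :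
    coeff (i * p) (g ^ i) = coeff p g ^ i := by
  induction i with
  | zero => simp
  | succ i ih =>
    rw [pow_succ', pow_succ', ← ih, add_mul, one_mul, add_comm,
      coeff_add_mul_of_le_order hg (nat_mul_le_order_pow hg i)]

theorem nat_lt_order_sum {ι : Type*} (s : Finset ι) (f : ι → R⟦X⟧) {n : ℕ}
    (hle : ∀ i ∈ s, (n : ℕ∞) ≤ (f i).order) (hcoeff : ∑ i ∈ s, coeff n (f i) = 0) :
    (n : ℕ∞) < (∑ i ∈ s, f i).order := by
  refine (Nat.cast_lt.mpr n.lt_succ_self).trans_le (nat_le_order _ (n + 1) fun k hk => ?_)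
  rw [map_sum]
  rcases Nat.lt_succ_iff_lt_or_eq.mp hk with hk | rfl
  · exact Finset.sum_eq_zero fun i hi =>
      coeff_of_lt_order k (lt_of_lt_of_le (by exact_mod_cast hk) (hle i hi))
  · exact hcoeff

end PowerSeries

theorem order_increases_root_perturbation_general
    (d : ℕ) (c : Fin (d + 1) → PowerSeries ℝ)
    (p : ℕ)
    (hb0 : (c 0).order ≠ ⊤)
    (hmin : ∀ i : Fin (d + 1), (c 0).order ≤ ((i : ℕ) * p : ℕ∞) + (c i).order)
    (a : ℝ)
    (ha : (∑ i ∈ Finset.univ.filter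
        (fun i : Fin (d + 1) => ((i : ℕ) * p : ℕ∞) + (c i).order = (c 0).order),
        (PowerSeries.coeff ((c i).order.toNat) (c i)) * a ^ (i : ℕ)) = 0) :
    ∀ η : PowerSeries ℝ, (p : ℕ∞) < η.order →
      (c 0).order < (∑ i : Fin (d + 1),
        c i * (PowerSeries.C a * PowerSeries.X ^ p + η) ^ (i : ℕ)).order := by
  intro η hη
  set g := C a * X ^ p + η
  obtain ⟨n, hn⟩ := ENat.ne_top_iff_exists.mp hb0
  have hg : (p : ℕ∞) ≤ g.order := by
    refine le_trans (le_min ?_ hη.le) (min_order_le_order_add _ _)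
    exact (order_X_pow p).ge.trans (le_add_self.trans (le_order_mul _ _))
  have hgp : coeff p g = a := by
    simp [g, coeff_X_pow, coeff_of_lt_order p hη]
  have hle : ∀ i : Fin (d + 1), (n : ℕ∞) ≤ ((i * p : ℕ) : ℕ∞) + (c i).order := fun i => by
    rw [hn]; exact_mod_cast hmin i
  rw [← hn]
  refine nat_lt_order_sum _ _ (fun i _ => ?_) ?_
  · calc (n : ℕ∞) ≤ ((i * p : ℕ) : ℕ∞) + (c i).order := hle i
      _ ≤ (g ^ (i : ℕ)).order + (c i).order := by gcongr; exact nat_mul_le_order_pow hg i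
      _ ≤ (c i * g ^ (i : ℕ)).order := by rw [add_comm]; exact le_order_mul _ _
  · rw [Finset.sum_congr rfl fun (i : Fin (d + 1)) _ =>
      coeff_mul_eq_ite_of_le_order (nat_mul_le_order_pow hg (i : ℕ)) (hle i)]
    simpa only [hn, Nat.cast_mul, coeff_pow_of_le_order hg, hgp, Finset.sum_filter] using ha

/-- Lemma 2.2(ii): if `c` is a root of the polynomial associated to the highest Newton
edge, then sliding strictly increases the order: the order of `Σ cᵢ·(c·t^p + η)^i` is
strictly greater than `order c₀`. -/
theorem order_increases_root_perturbation
    (d : ℕ) (c : Fin (d + 1) → PowerSeries ℝ) (hc : ∃ i, c i ≠ 0)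
    (p : ℕ) (hp : 0 < p)
    (hb0 : (c 0).order ≠ ⊤)
    (hmin : ∀ i : Fin (d + 1), (c 0).order ≤ ((i : ℕ) * p : ℕ∞) + (c i).order)
    (a : ℝ)
    (ha : (∑ i ∈ Finset.univ.filter
        (fun i : Fin (d + 1) => ((i : ℕ) * p : ℕ∞) + (c i).order = (c 0).order),
        (PowerSeries.coeff ((c i).order.toNat) (c i)) * a ^ (i : ℕ)) = 0) :
    ∀ η : PowerSeries ℝ, (p : ℕ∞) < η.order →
      (c 0).order < (∑ i : Fin (d + 1),
        c i * (PowerSeries.C a * PowerSeries.X ^ p + η) ^ (i : ℕ)).order :=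
  order_increases_root_perturbation_general d c p hb0 hmin a ha
end

section
/- Let γ ∈ ℂ[[t]] be a root of F, i.e., f(γ(t), t^N) = 0. Suppose that for every root γ' ∈ ℂ[[t]] of F with γ' ≠ γ and every natural number k with k ≤ order(γ − γ'), the k-th coefficient of γ is real. Then every coefficient of γ is real. -/
/-!
Conjugating coefficients is an `ℝ`-algebra map of `ℂ⟦X⟧` fixing `X ^ N`, so since `f` is real it
sends the root `γ` to a root `conj γ`. If `conj γ ≠ γ`, let `m` be their contact order, the order of
`γ - conj γ`. Its coefficient `2 i Im (coeff m γ)` is nonzero, yet the hypothesis applied to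
`conj γ` says `coeff m γ` is real.
-/

open PowerSeries

namespace PowerSeries

noncomputable def conj : ℂ⟦X⟧ →ₐ[ℝ] ℂ⟦X⟧ :=
  mapAlgHom (Complex.conjAe : ℂ →ₐ[ℝ] ℂ)

@[simp]
theorem coeff_conj (γ : ℂ⟦X⟧) (k : ℕ) : coeff k (conj γ) = starRingEnd ℂ (coeff k γ) := by
  simp [conj, mapAlgHom_apply]

@[simp]
theorem conj_X : conj (X : ℂ⟦X⟧) = X := by
  ext k
  simp [coeff_X, apply_ite (starRingEnd ℂ)]

theorem coeff_sub_conj (γ : ℂ⟦X⟧) (k : ℕ) :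
    coeff k (γ - conj γ) = ((2 * (coeff k γ).im : ℝ) : ℂ) * Complex.I := by
  rw [map_sub, coeff_conj, Complex.sub_conj]

theorem aeval_conj_eq_zero {n : ℕ} {f : MvPolynomial (Fin n) ℝ} {v : Fin n → ℂ⟦X⟧}
    (h : MvPolynomial.aeval v f = 0) : MvPolynomial.aeval (fun i => conj (v i)) f = 0 := by
  rw [← MvPolynomial.comp_aeval_apply, h, map_zero]

end PowerSeries

theorem root_real_of_truncation_real_general
    (f : MvPolynomial (Fin 2) ℝ) (N : ℕ)
    (γ : PowerSeries ℂ)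
    (hroot : MvPolynomial.aeval ![γ, (PowerSeries.X : PowerSeries ℂ) ^ N] f = 0)
    (hcoef : ∀ γ' : PowerSeries ℂ,
      MvPolynomial.aeval ![γ', (PowerSeries.X : PowerSeries ℂ) ^ N] f = 0 → γ' ≠ γ →
      ∀ k : ℕ, (k : ℕ∞) ≤ (γ - γ').order → (PowerSeries.coeff k γ).im = 0) :
    ∀ k : ℕ, (PowerSeries.coeff k γ).im = 0 := by
  have hroot_conj : MvPolynomial.aeval ![conj γ, (X : ℂ⟦X⟧) ^ N] f = 0 := by
    convert aeval_conj_eq_zero hroot using 3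
    funext i
    fin_cases i <;> simp
  by_cases hreal : γ - conj γ = 0
  · intro k
    simpa [coeff_sub_conj] using congrArg (coeff k) hreal
  · have hne : conj γ ≠ γ := fun h => hreal (by rw [h, sub_self])
    refine absurd ?_ (coeff_order hreal)
    rw [coeff_sub_conj, hcoef _ hroot_conj hne _ (coe_toNat_order hreal).le]
    simp

/-- Theorem 4(i): if `γ` is a Newton–Puiseux root of the real polynomial `f` whose
coefficients are real up to (and including) its contact order with every other root,
then all coefficients of `γ` are real. -/
theorem root_real_of_truncation_real
    (f : MvPolynomial (Fin 2) ℝ) (hf : f ≠ 0) (N : ℕ) (hN : 0 < N)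
    (γ : PowerSeries ℂ)
    (hroot : MvPolynomial.aeval ![γ, (PowerSeries.X : PowerSeries ℂ) ^ N] f = 0)
    (hcoef : ∀ γ' : PowerSeries ℂ,
      MvPolynomial.aeval ![γ', (PowerSeries.X : PowerSeries ℂ) ^ N] f = 0 → γ' ≠ γ →
      ∀ k : ℕ, (k : ℕ∞) ≤ (γ - γ').order → (PowerSeries.coeff k γ).im = 0) :
    ∀ k : ℕ, (PowerSeries.coeff k γ).im = 0 :=
  root_real_of_truncation_real_general f N γ hroot hcoef
end

section
/- Let h := gcd(f, g) in ℝ[x,y]. If there exists ξ ∈ ℂ[[t]] with h(ξ(t), t^N) = 0 and order(ξ − γ̃) > r, then g(γ(t), t^N) = 0, i.e., γ is also a Newton–Puiseux root of g. -/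
/-! A root `ξ` of `h = gcd(f, g)` is a root of `f`, and agreeing with the truncation `γ̃` beyond
order `r` means `order(γ - ξ) > r`. Since `r` is the largest contact order of `γ` with another
root of `f`, this forces `ξ = γ`; and `h ∣ g` makes `γ` a root of `g`. -/

open PowerSeries

theorem map_eq_zero_of_dvd {M₀ N₀ F : Type*} [MonoidWithZero M₀] [MonoidWithZero N₀]
    [FunLike F M₀ N₀] [MulHomClass F M₀ N₀] (φ : F) {a b : M₀} (hab : a ∣ b) (ha : φ a = 0) :
    φ b = 0 :=
  zero_dvd_iff.mp (ha ▸ map_dvd φ hab)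

theorem PowerSeries.coe_lt_order_sub_iff {R : Type*} [Ring R] {φ ψ : R⟦X⟧} {r : ℕ} :
    (r : ℕ∞) < (φ - ψ).order ↔ ∀ i ≤ r, coeff i φ = coeff i ψ := by
  constructor
  · intro hr i hi
    rw [← sub_eq_zero, ← map_sub]
    exact coeff_of_lt_order i ((Nat.cast_le.mpr hi).trans_lt hr)
  · intro hcoeff
    have hle : ((r + 1 : ℕ) : ℕ∞) ≤ (φ - ψ).order := nat_le_order _ _ fun i hi => by
      rw [map_sub, sub_eq_zero]
      exact hcoeff i (Nat.lt_succ_iff.mp hi)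
    exact (ENat.add_one_le_iff (ENat.natCast_ne_top r)).mp (mod_cast hle)

theorem root_of_g_of_truncation_root_of_gcd_general
    (f g : MvPolynomial (Fin 2) ℝ)
    (N : ℕ)
    (h : MvPolynomial (Fin 2) ℝ)
    (hdvdf : h ∣ f) (hdvdg : h ∣ g)
    (γ : PowerSeries ℂ)
    (r : ℕ)
    (hrmax : (∃ γ' : PowerSeries ℂ,
        MvPolynomial.aeval ![γ', (PowerSeries.X : PowerSeries ℂ) ^ N] f = 0 ∧ γ' ≠ γ ∧
        (γ - γ').order = (r : ℕ∞)) ∧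
      ∀ γ' : PowerSeries ℂ,
        MvPolynomial.aeval ![γ', (PowerSeries.X : PowerSeries ℂ) ^ N] f = 0 → γ' ≠ γ →
        (γ - γ').order ≤ (r : ℕ∞))
    (γt : PowerSeries ℂ)
    (hγt : ∀ k : ℕ, PowerSeries.coeff k γt =
      if k ≤ r then PowerSeries.coeff k γ else 0)
    (hξ : ∃ ξ : PowerSeries ℂ,
      MvPolynomial.aeval ![ξ, (PowerSeries.X : PowerSeries ℂ) ^ N] h = 0 ∧
      (r : ℕ∞) < (ξ - γt).order) :
    MvPolynomial.aeval ![γ, (PowerSeries.X : PowerSeries ℂ) ^ N] g = 0 := by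
  obtain ⟨ξ, hξh, hξγt⟩ := hξ
  have hξf := map_eq_zero_of_dvd _ hdvdf hξh
  have hγξ : (r : ℕ∞) < (γ - ξ).order := coe_lt_order_sub_iff.mpr fun i hi => by
    rw [coe_lt_order_sub_iff.mp hξγt i hi, hγt, if_pos hi]
  obtain rfl : ξ = γ := by
    by_contra hne
    exact (hrmax.2 ξ hξf hne).not_gt hγξ
  exact map_eq_zero_of_dvd _ hdvdg hξh

/-- Theorem 4(iii): if the truncated Newton–Puiseux root `γ̃` of `f` is a root
mod `r+` of `gcd(f,g)`, then `γ` is also a Newton–Puiseux root of `g`. -/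
theorem root_of_g_of_truncation_root_of_gcd
    (f g : MvPolynomial (Fin 2) ℝ) (hf : f ≠ 0) (hg : g ≠ 0)
    (m₀ : ℕ) (hm₀ : ∀ j < m₀, MvPolynomial.homogeneousComponent j f = 0)
    (hm₀' : MvPolynomial.homogeneousComponent m₀ f ≠ 0)
    (hregf : MvPolynomial.eval ![1, 0] (MvPolynomial.homogeneousComponent m₀ f) ≠ 0)
    (n₀ : ℕ) (hn₀ : ∀ j < n₀, MvPolynomial.homogeneousComponent j g = 0)
    (hn₀' : MvPolynomial.homogeneousComponent n₀ g ≠ 0)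
    (hregg : MvPolynomial.eval ![1, 0] (MvPolynomial.homogeneousComponent n₀ g) ≠ 0)
    (N : ℕ) (hN : 0 < N)
    (h : MvPolynomial (Fin 2) ℝ)
    (hdvdf : h ∣ f) (hdvdg : h ∣ g)
    (hgcd : ∀ h' : MvPolynomial (Fin 2) ℝ, h' ∣ f → h' ∣ g → h' ∣ h)
    (γ : PowerSeries ℂ)
    (hroot : MvPolynomial.aeval ![γ, (PowerSeries.X : PowerSeries ℂ) ^ N] f = 0)
    (r : ℕ)
    (hrmax : (∃ γ' : PowerSeries ℂ,
        MvPolynomial.aeval ![γ', (PowerSeries.X : PowerSeries ℂ) ^ N] f = 0 ∧ γ' ≠ γ ∧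
        (γ - γ').order = (r : ℕ∞)) ∧
      ∀ γ' : PowerSeries ℂ,
        MvPolynomial.aeval ![γ', (PowerSeries.X : PowerSeries ℂ) ^ N] f = 0 → γ' ≠ γ →
        (γ - γ').order ≤ (r : ℕ∞))
    (γt : PowerSeries ℂ)
    (hγt : ∀ k : ℕ, PowerSeries.coeff k γt =
      if k ≤ r then PowerSeries.coeff k γ else 0)
    (hξ : ∃ ξ : PowerSeries ℂ,
      MvPolynomial.aeval ![ξ, (PowerSeries.X : PowerSeries ℂ) ^ N] h = 0 ∧
      (r : ℕ∞) < (ξ - γt).order) :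
    MvPolynomial.aeval ![γ, (PowerSeries.X : PowerSeries ℂ) ^ N] g = 0 :=
  root_of_g_of_truncation_root_of_gcd_general f g N h hdvdf hdvdg γ r hrmax γt hγt hξ
end

section
/- If γ and γ' are two distinct roots of F, with contact orders r and r' and truncations γ̃ (keeping coefficients in degrees ≤ r) and γ̃' (keeping coefficients in degrees ≤ r') respectively, then γ̃ ≠ γ̃'. In other words, the map sending a Newton–Puiseux root of f to its truncated root is injective. -/
/-! The order `d` of `γ - γ'` is at most both contact orders `r` and `r'`, so both truncations
keep the coefficient of degree `d`, where `γ` and `γ'` differ. -/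

open PowerSeries

namespace PowerSeries

variable {R : Type*} [Ring R]

theorem order_sub_comm (φ ψ : R⟦X⟧) : (φ - ψ).order = (ψ - φ).order := by
  rw [← neg_sub, order_neg]

theorem coeff_order_sub_ne {φ ψ : R⟦X⟧} (hne : φ ≠ ψ) :
    coeff (φ - ψ).order.toNat φ ≠ coeff (φ - ψ).order.toNat ψ := by
  simpa only [map_sub, sub_ne_zero] using coeff_order (sub_ne_zero.mpr hne)

theorem truncations_ne_of_order_sub_le {φ ψ φt ψt : R⟦X⟧} {n m : ℕ} (hne : φ ≠ ψ)
    (hn : (φ - ψ).order ≤ n) (hm : (φ - ψ).order ≤ m)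
    (hφt : ∀ k, coeff k φt = if k ≤ n then coeff k φ else 0)
    (hψt : ∀ k, coeff k ψt = if k ≤ m then coeff k ψ else 0) :
    φt ≠ ψt := by
  set d := (φ - ψ).order.toNat
  have hφd : coeff d φt = coeff d φ := by rw [hφt, if_pos (ENat.toNat_le_of_le_natCast hn)]
  have hψd : coeff d ψt = coeff d ψ := by rw [hψt, if_pos (ENat.toNat_le_of_le_natCast hm)]
  intro h
  exact coeff_order_sub_ne hne (by rw [← hφd, ← hψd, h])

end PowerSeries

theorem truncated_roots_distinct_general
    (f : MvPolynomial (Fin 2) ℝ)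
    (N : ℕ)
    (γ γ' : PowerSeries ℂ)
    (hroot : MvPolynomial.aeval ![γ, (PowerSeries.X : PowerSeries ℂ) ^ N] f = 0)
    (hroot' : MvPolynomial.aeval ![γ', (PowerSeries.X : PowerSeries ℂ) ^ N] f = 0)
    (hne : γ ≠ γ')
    (r : ℕ)
    (hrmax : (∃ δ : PowerSeries ℂ,
        MvPolynomial.aeval ![δ, (PowerSeries.X : PowerSeries ℂ) ^ N] f = 0 ∧ δ ≠ γ ∧
        (γ - δ).order = (r : ℕ∞)) ∧
      ∀ δ : PowerSeries ℂ,
        MvPolynomial.aeval ![δ, (PowerSeries.X : PowerSeries ℂ) ^ N] f = 0 → δ ≠ γ →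
        (γ - δ).order ≤ (r : ℕ∞))
    (r' : ℕ)
    (hrmax' : (∃ δ : PowerSeries ℂ,
        MvPolynomial.aeval ![δ, (PowerSeries.X : PowerSeries ℂ) ^ N] f = 0 ∧ δ ≠ γ' ∧
        (γ' - δ).order = (r' : ℕ∞)) ∧
      ∀ δ : PowerSeries ℂ,
        MvPolynomial.aeval ![δ, (PowerSeries.X : PowerSeries ℂ) ^ N] f = 0 → δ ≠ γ' →
        (γ' - δ).order ≤ (r' : ℕ∞))
    (γt γt' : PowerSeries ℂ)
    (hγt : ∀ k : ℕ, PowerSeries.coeff k γt =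
      if k ≤ r then PowerSeries.coeff k γ else 0)
    (hγt' : ∀ k : ℕ, PowerSeries.coeff k γt' =
      if k ≤ r' then PowerSeries.coeff k γ' else 0) :
    γt ≠ γt' := by
  have hr : (γ - γ').order ≤ r := hrmax.2 γ' hroot' hne.symm
  have hr' : (γ - γ').order ≤ r' := order_sub_comm γ γ' ▸ hrmax'.2 γ hroot hne
  exact truncations_ne_of_order_sub_le hne hr hr' hγt hγt'

/-- The map sending a Newton–Puiseux root of `f` to its truncated root (keeping the
coefficients in degrees up to the contact order) is injective: distinct roots have
distinct truncations. -/
theorem truncated_roots_distinct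
    (f : MvPolynomial (Fin 2) ℝ) (hf : f ≠ 0)
    (m₀ : ℕ) (hm₀ : ∀ j < m₀, MvPolynomial.homogeneousComponent j f = 0)
    (hm₀' : MvPolynomial.homogeneousComponent m₀ f ≠ 0)
    (hreg : MvPolynomial.eval ![1, 0] (MvPolynomial.homogeneousComponent m₀ f) ≠ 0)
    (N : ℕ) (hN : 0 < N)
    (γ γ' : PowerSeries ℂ)
    (hroot : MvPolynomial.aeval ![γ, (PowerSeries.X : PowerSeries ℂ) ^ N] f = 0)
    (hroot' : MvPolynomial.aeval ![γ', (PowerSeries.X : PowerSeries ℂ) ^ N] f = 0)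
    (hne : γ ≠ γ')
    (r : ℕ)
    (hrmax : (∃ δ : PowerSeries ℂ,
        MvPolynomial.aeval ![δ, (PowerSeries.X : PowerSeries ℂ) ^ N] f = 0 ∧ δ ≠ γ ∧
        (γ - δ).order = (r : ℕ∞)) ∧
      ∀ δ : PowerSeries ℂ,
        MvPolynomial.aeval ![δ, (PowerSeries.X : PowerSeries ℂ) ^ N] f = 0 → δ ≠ γ →
        (γ - δ).order ≤ (r : ℕ∞))
    (r' : ℕ)
    (hrmax' : (∃ δ : PowerSeries ℂ,
        MvPolynomial.aeval ![δ, (PowerSeries.X : PowerSeries ℂ) ^ N] f = 0 ∧ δ ≠ γ' ∧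
        (γ' - δ).order = (r' : ℕ∞)) ∧
      ∀ δ : PowerSeries ℂ,
        MvPolynomial.aeval ![δ, (PowerSeries.X : PowerSeries ℂ) ^ N] f = 0 → δ ≠ γ' →
        (γ' - δ).order ≤ (r' : ℕ∞))
    (γt γt' : PowerSeries ℂ)
    (hγt : ∀ k : ℕ, PowerSeries.coeff k γt =
      if k ≤ r then PowerSeries.coeff k γ else 0)
    (hγt' : ∀ k : ℕ, PowerSeries.coeff k γt' =
      if k ≤ r' then PowerSeries.coeff k γ' else 0) :
    γt ≠ γt' :=
  truncated_roots_distinct_general f N γ γ' hroot hroot' hne r hrmax r' hrmax' γt γt' hγt hγt'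
end

section
/- If 𝓛_g(f) > 1, then the limit of g(x,y)/f(x,y) as (x,y) tends to (0,0) through points with f(x,y) ≠ 0 does not exist; that is, for every real number L, it is not the case that g/f tends to L along this approach. -/
open Filter

/-- If `𝓛_g(f) > 1`, then the limit of `g/f` as `(x,y) → (0,0)` through points where
`f(x,y) ≠ 0` does not exist: for every real `L`, `g/f` does not tend to `L`. -/
theorem limit_not_exists_of_lojasiewicz_exponent_gt_one
    (f g : MvPolynomial (Fin 2) ℝ) (hf : f ≠ 0) (hg : g ≠ 0)
    (hf0 : MvPolynomial.eval ![0, 0] f = 0) (hg0 : MvPolynomial.eval ![0, 0] g = 0)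
    (hzero : ∀ᶠ p : ℝ × ℝ in nhds 0,
      MvPolynomial.eval ![p.1, p.2] f = 0 → MvPolynomial.eval ![p.1, p.2] g = 0)
    (hgt : 1 < sInf (lojSet (fun p : ℝ × ℝ => MvPolynomial.eval ![p.1, p.2] f)
      (fun p : ℝ × ℝ => MvPolynomial.eval ![p.1, p.2] g))) :
    ∀ L : ℝ, ¬ Tendsto (fun p : ℝ × ℝ =>
        MvPolynomial.eval ![p.1, p.2] g / MvPolynomial.eval ![p.1, p.2] f)
      (nhdsWithin 0 {p : ℝ × ℝ | MvPolynomial.eval ![p.1, p.2] f ≠ 0})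
      (nhds L) := by
  intro L hL
  set F : ℝ × ℝ → ℝ := fun p => MvPolynomial.eval ![p.1, p.2] f with hF
  set G : ℝ × ℝ → ℝ := fun p => MvPolynomial.eval ![p.1, p.2] g with hG
  have K : ℝ := |L| + 1
  have hKpos : (0:ℝ) < |L| + 1 := by positivity
  have h1 : ∀ᶠ p in nhdsWithin (0 : ℝ × ℝ) {p : ℝ × ℝ | F p ≠ 0},
      |G p / F p - L| < 1 := by
    have := Metric.tendsto_nhds.mp hL 1 one_pos
    filter_upwards [this] with p hp
    simpa [Real.dist_eq] using hp
  rw [eventually_nhdsWithin_iff] at h1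
  have hcomb : ∀ᶠ p in nhds (0 : ℝ × ℝ),
      ((|L| + 1)⁻¹) * |G p| ^ (1:ℝ) ≤ |F p| := by
    filter_upwards [h1, hzero] with p hp hz
    rw [Real.rpow_one]
    by_cases hFp : F p = 0
    · have : G p = 0 := hz hFp
      simp [hFp, this]
    · have hp' := hp hFp
      have hratio : |G p / F p| < |L| + 1 := by
        have := abs_sub_abs_le_abs_sub (G p / F p) L
        linarith [abs_nonneg L]
      have hFabs : (0:ℝ) < |F p| := abs_pos.mpr hFp
      have : |G p| < (|L| + 1) * |F p| := by
        rw [abs_div] at hratio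
        calc |G p| = |G p| / |F p| * |F p| := by field_simp
        _ < (|L| + 1) * |F p| := by
            exact mul_lt_mul_of_pos_right hratio hFabs
      rw [inv_mul_le_iff₀ hKpos]
      linarith
  rw [Metric.eventually_nhds_iff_ball] at hcomb
  obtain ⟨ε, hε, hball⟩ := hcomb
  have hmem : (1:ℝ) ∈ lojSet F G := by
    refine ⟨one_pos, (|L| + 1)⁻¹, by positivity, ε / 2, by positivity, fun p hp => ?_⟩
    apply hball
    have : ‖p‖ < ε := lt_of_le_of_lt hp (by linarith)
    simpa [Metric.mem_ball, dist_eq_norm] using this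
  have hbdd : BddBelow (lojSet F G) := ⟨0, fun a ha => le_of_lt ha.1⟩
  have := csInf_le hbdd hmem
  linarith
end
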